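/- Fix q ≥ 1, 0 ≤ c ≤ 1/q, and a symmetric q×q matrix J. The lower threshold ground state energy W ↦ E^c(W,J) = inf_{a ∈ A_c} E_a(W,J), where A_c is the set of probability distributions on [q] with all components at least c, is Lipschitz continuous with respect to the cut distance δ_□ on graphons: |E^c(U,J) − E^c(W,J)| ≤ q²·‖J‖_∞·δ_□(U,W). -/

import Mathlib

open MeasureTheory Filter

noncomputable section

/-- The unit interval as a subset of ℝ. -/
def I01 : Set ℝ := Set.Icc 0 1

/-- A `q`-fractional partition: measurable functions `ρ i : [0,1] → [0,1]`
summing pointwise to `1` on `[0,1]`. -/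
structure FracPartition (q : ℕ) where
  toFun : Fin q → ℝ → ℝ
  measurable : ∀ i, Measurable (toFun i)
  mem_I01 : ∀ i x, x ∈ I01 → toFun i x ∈ I01
  sum_one : ∀ x ∈ I01, ∑ i, toFun i x = 1

/-- Energy of a fractional partition with respect to a graphon `W` and matrix `J`. -/
def energy {q : ℕ} (W : ℝ → ℝ → ℝ) (J : Matrix (Fin q) (Fin q) ℝ)
    (ρ : FracPartition q) : ℝ :=
  - ∑ i, ∑ j, J i j * ∫ x in I01, ∫ y in I01, ρ.toFun i x * ρ.toFun j y * W x y

/-- `a` is a probability distribution on `Fin q`. -/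
def IsDist {q : ℕ} (a : Fin q → ℝ) : Prop :=
  (∀ i, 0 ≤ a i) ∧ ∑ i, a i = 1

/-- Microcanonical ground state energy. -/
def mgse {q : ℕ} (W : ℝ → ℝ → ℝ) (J : Matrix (Fin q) (Fin q) ℝ) (a : Fin q → ℝ) : ℝ :=
  sInf {e | ∃ ρ : FracPartition q, (∀ i, (∫ x in I01, ρ.toFun i x) = a i) ∧ e = energy W J ρ}

/-- General lower threshold ground state energy with threshold vector `x`. -/
def ltgseV {q : ℕ} (W : ℝ → ℝ → ℝ) (J : Matrix (Fin q) (Fin q) ℝ) (x : Fin q → ℝ) : ℝ :=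
  sInf {e | ∃ a : Fin q → ℝ, IsDist a ∧ (∀ i, x i ≤ a i) ∧ e = mgse W J a}

/-- Homogeneous lower threshold ground state energy with scalar threshold `c`. -/
def ltgse {q : ℕ} (W : ℝ → ℝ → ℝ) (J : Matrix (Fin q) (Fin q) ℝ) (c : ℝ) : ℝ :=
  ltgseV W J (fun _ => c)

/-- Unrestricted ground state energy. -/
def gse {q : ℕ} (W : ℝ → ℝ → ℝ) (J : Matrix (Fin q) (Fin q) ℝ) : ℝ :=
  sInf {e | ∃ ρ : FracPartition q, e = energy W J ρ}

/-- `W` is a graphon: a bounded symmetric measurable function. -/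
def IsGraphon (W : ℝ → ℝ → ℝ) : Prop :=
  Measurable (Function.uncurry W) ∧ (∀ x y, W x y = W y x) ∧ ∃ M, ∀ x y, |W x y| ≤ M

/-- The cut norm of a kernel on `[0,1]²`. -/
def cutNorm (W : ℝ → ℝ → ℝ) : ℝ :=
  sSup {r | ∃ f g : ℝ → ℝ, Measurable f ∧ Measurable g ∧
    (∀ x, f x ∈ I01) ∧ (∀ x, g x ∈ I01) ∧
    r = |∫ x in I01, ∫ y in I01, W x y * f x * g y|}

/-- The cut distance between two graphons. -/
def cutDist (U W : ℝ → ℝ → ℝ) : ℝ :=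
  sInf {r | ∃ φ : ℝ → ℝ, Measurable φ ∧ Set.BijOn φ I01 I01 ∧
    MeasurePreserving φ (volume.restrict I01) (volume.restrict I01) ∧
    r = cutNorm (fun x y => U x y - W (φ x) (φ y))}

/-!
The energy of a fractional partition `ρ` is a sum of `q²` terms `J i j ∫∫ ρ_i(x) ρ_j(y) W(x,y)`,
linear in `W`. Since `ρ_i` and `ρ_j` take values in `[0,1]`, each term of `energy U - energy V`
is at most `|J i j| ‖U - V‖_□`. Infima of two families that differ by at most `ε` pointwise
differ by at most `ε`, so this bound passes to the microcanonical energies and then to `ltgse`.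
All these energies are unchanged when `W` is replaced by `W^φ` for a measure-preserving bijection
`φ`: partitions are transported by pulling back along `φ` and along a measurable left inverse of
`φ`. Taking the infimum over `φ` gives the cut distance.
-/

open Set Function

lemma measurableSet_I01 : MeasurableSet I01 := measurableSet_Icc

instance : IsFiniteMeasure (volume.restrict I01) :=
  ⟨by simp [I01, Real.volume_Icc]⟩

lemma zero_mem_I01 : (0 : ℝ) ∈ I01 := ⟨le_rfl, zero_le_one⟩

lemma abs_le_one_of_mem_I01 {t : ℝ} (ht : t ∈ I01) : |t| ≤ 1 :=
  abs_le.2 ⟨by linarith [ht.1], ht.2⟩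

lemma abs_setIntegral_I01_le {f : ℝ → ℝ} {C : ℝ} (h : ∀ x ∈ I01, |f x| ≤ C) :
    |∫ x in I01, f x| ≤ C := by
  simpa [I01, Measure.real, Real.volume_Icc] using
    norm_setIntegral_le_of_norm_le_const (μ := volume) (f := f) (C := C) measure_Icc_lt_top h

section InfimumBounds

variable {ι : Type*} {P : ι → Prop} {f g : ι → ℝ} {m C : ℝ}

lemma sInf_le_sInf_add_of_le_add (hne : ∃ i, P i) (hm : ∀ i, P i → m ≤ f i)
    (hfg : ∀ i, P i → f i ≤ g i + C) :
    sInf {e | ∃ i, P i ∧ e = f i} ≤ sInf {e | ∃ i, P i ∧ e = g i} + C := by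
  obtain ⟨i₀, hi₀⟩ := hne
  have : sInf {e | ∃ i, P i ∧ e = f i} - C ≤ sInf {e | ∃ i, P i ∧ e = g i} := by
    refine le_csInf ⟨g i₀, i₀, hi₀, rfl⟩ ?_
    rintro _ ⟨i, hi, rfl⟩
    have hbdd : BddBelow {e | ∃ i, P i ∧ e = f i} :=
      ⟨m, by rintro _ ⟨j, hj, rfl⟩; exact hm j hj⟩
    have := csInf_le hbdd ⟨i, hi, rfl⟩
    linarith [hfg i hi]
  linarith

lemma abs_sInf_sub_sInf_le (hne : ∃ i, P i) (hm : ∀ i, P i → m ≤ f i)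
    (hfg : ∀ i, P i → |f i - g i| ≤ C) :
    |sInf {e | ∃ i, P i ∧ e = f i} - sInf {e | ∃ i, P i ∧ e = g i}| ≤ C := by
  have hfg' : ∀ i, P i → -C ≤ f i - g i ∧ f i - g i ≤ C := fun i hi => abs_le.1 (hfg i hi)
  have h₁ := sInf_le_sInf_add_of_le_add (g := g) (C := C) hne hm fun i hi => by
    linarith [hfg' i hi]
  have h₂ := sInf_le_sInf_add_of_le_add (m := m - C) (f := g) (g := f) (C := C) hne
    (fun i hi => by linarith [hm i hi, hfg' i hi]) fun i hi => by linarith [hfg' i hi]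
  exact abs_sub_le_iff.2 ⟨by linarith, by linarith⟩

end InfimumBounds

lemma le_mul_csInf {S : Set ℝ} {a K : ℝ} (hne : S.Nonempty) (hK : 0 ≤ K)
    (h : ∀ r ∈ S, a ≤ K * r) : a ≤ K * sInf S := by
  rw [← smul_eq_mul, ← Real.sInf_smul_of_nonneg hK]
  exact le_csInf (hne.smul_set) (by rintro _ ⟨r, hr, rfl⟩; exact h r hr)

section ChangeOfVariables

variable {α : Type*} [MeasurableSpace α] {μ : Measure α} {φ : α → α}

lemma MeasureTheory.MeasurePreserving.integral_comp_of_aestronglyMeasurable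
    {β : Type*} [MeasurableSpace β] {ν : Measure β} {ψ : α → β} (hψ : MeasurePreserving ψ μ ν)
    {f : β → ℝ} (hf : AEStronglyMeasurable f ν) : ∫ x, f (ψ x) ∂μ = ∫ y, f y ∂ν := by
  rw [← hψ.map_eq, integral_map hψ.aemeasurable (hψ.map_eq ▸ hf)]

lemma MeasureTheory.MeasurePreserving.integral_integral_comp [SFinite μ]
    (hφ : MeasurePreserving φ μ μ) {F : α → α → ℝ} (hF : Measurable (uncurry F)) :
    ∫ x, ∫ y, F (φ x) (φ y) ∂μ ∂μ = ∫ x, ∫ y, F x y ∂μ ∂μ := by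
  have hinner : ∀ x, ∫ y, F (φ x) (φ y) ∂μ = ∫ y, F (φ x) y ∂μ := fun x =>
    hφ.integral_comp_of_aestronglyMeasurable
      (hF.comp measurable_prodMk_left).aestronglyMeasurable
  simp only [hinner]
  exact hφ.integral_comp_of_aestronglyMeasurable
    (hF.stronglyMeasurable.integral_prod_right (ν := μ)).aestronglyMeasurable

end ChangeOfVariables

lemma exists_measurable_leftInvOn {α β : Type*} [MeasurableSpace α] [StandardBorelSpace α]
    [MeasurableSpace β] [MeasurableSpace.CountablySeparated β] {s : Set α}
    (hs : MeasurableSet s) (hne : s.Nonempty) {φ : α → β} (hφ : Measurable φ)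
    (hinj : InjOn φ s) :
    ∃ G : β → α, Measurable G ∧ (∀ y, G y ∈ s) ∧ LeftInvOn G φ s := by
  have := hs.standardBorel
  have := hne.to_subtype
  have hemb : MeasurableEmbedding (s.domRestrict φ) :=
    (hφ.comp measurable_subtype_coe).measurableEmbedding (injOn_iff_injective.1 hinj)
  exact ⟨fun y => hemb.invFun y, measurable_subtype_coe.comp hemb.measurable_invFun,
    fun y => (hemb.invFun y).2, fun x hx => congrArg Subtype.val (hemb.leftInverse_invFun ⟨x, hx⟩)⟩

namespace FracPartition

variable {q : ℕ}

lemma abs_le_one (ρ : FracPartition q) (i : Fin q) {x : ℝ} (hx : x ∈ I01) :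
    |ρ.toFun i x| ≤ 1 :=
  abs_le_one_of_mem_I01 (ρ.mem_I01 i x hx)

def comp (ρ : FracPartition q) {ψ : ℝ → ℝ} (hψ : Measurable ψ) (hmaps : MapsTo ψ I01 I01) :
    FracPartition q where
  toFun i x := ρ.toFun i (ψ x)
  measurable i := (ρ.measurable i).comp hψ
  mem_I01 i _ hx := ρ.mem_I01 i _ (hmaps hx)
  sum_one _ hx := ρ.sum_one _ (hmaps hx)

def const {a : Fin q → ℝ} (ha : IsDist a) : FracPartition q where
  toFun i _ := a i
  measurable _ := measurable_const
  mem_I01 i _ _ := ⟨ha.1 i, ha.2 ▸ Finset.single_le_sum (fun j _ => ha.1 j) (Finset.mem_univ i)⟩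
  sum_one _ _ := ha.2

lemma setIntegral_const {a : Fin q → ℝ} (ha : IsDist a) (i : Fin q) :
    ∫ x in I01, (const ha).toFun i x = a i := by
  simp [const, I01, Measure.real, Real.volume_Icc]

lemma setIntegral_comp (ρ : FracPartition q) {φ : ℝ → ℝ} (hmaps : MapsTo φ I01 I01)
    (hmp : MeasurePreserving φ (volume.restrict I01) (volume.restrict I01)) (i : Fin q) :
    ∫ x in I01, (ρ.comp hmp.measurable hmaps).toFun i x = ∫ x in I01, ρ.toFun i x :=
  hmp.integral_comp_of_aestronglyMeasurable (ρ.measurable i).aestronglyMeasurable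

end FracPartition

section Energy

variable {q : ℕ} {J : Matrix (Fin q) (Fin q) ℝ}

lemma measurable_pairIntegrand {V : ℝ → ℝ → ℝ} (hV : Measurable (uncurry V))
    (ρ : FracPartition q) (i j : Fin q) :
    Measurable (uncurry fun x y => ρ.toFun i x * ρ.toFun j y * V x y) :=
  (((ρ.measurable i).comp measurable_fst).mul ((ρ.measurable j).comp measurable_snd)).mul hV

lemma integrable_pairIntegrand {V : ℝ → ℝ → ℝ} (hV : Measurable (uncurry V))
    (hVb : ∃ M, ∀ x y, |V x y| ≤ M) (ρ : FracPartition q) (i j : Fin q) :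
    Integrable (fun p : ℝ × ℝ => ρ.toFun i p.1 * ρ.toFun j p.2 * V p.1 p.2)
      ((volume.restrict I01).prod (volume.restrict I01)) := by
  obtain ⟨M, hM⟩ := hVb
  refine Integrable.of_bound (measurable_pairIntegrand hV ρ i j).aestronglyMeasurable M ?_
  rw [Measure.prod_restrict]
  filter_upwards [ae_restrict_mem (measurableSet_I01.prod measurableSet_I01)] with p hp
  rw [Real.norm_eq_abs, abs_mul, abs_mul]
  have hi := ρ.abs_le_one i hp.1
  have hj := ρ.abs_le_one j hp.2
  calc |ρ.toFun i p.1| * |ρ.toFun j p.2| * |V p.1 p.2| ≤ 1 * 1 * |V p.1 p.2| := by gcongr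
    _ ≤ M := by linarith [hM p.1 p.2]

lemma energy_sub {U V : ℝ → ℝ → ℝ} (hU : Measurable (uncurry U))
    (hUb : ∃ M, ∀ x y, |U x y| ≤ M) (hV : Measurable (uncurry V))
    (hVb : ∃ M, ∀ x y, |V x y| ≤ M) (ρ : FracPartition q) :
    energy U J ρ - energy V J ρ = energy (fun x y => U x y - V x y) J ρ := by
  have hsub : ∀ i j,
      ∫ x in I01, ∫ y in I01, ρ.toFun i x * ρ.toFun j y * (U x y - V x y) =
        (∫ x in I01, ∫ y in I01, ρ.toFun i x * ρ.toFun j y * U x y) -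
          ∫ x in I01, ∫ y in I01, ρ.toFun i x * ρ.toFun j y * V x y := fun i j => by
    simp_rw [mul_sub]
    exact integral_integral_sub (integrable_pairIntegrand hU hUb ρ i j)
      (integrable_pairIntegrand hV hVb ρ i j)
  simp only [energy, hsub]
  simp only [mul_sub, Finset.sum_sub_distrib]
  ring

lemma energy_congr {W : ℝ → ℝ → ℝ} {ρ σ : FracPartition q}
    (h : ∀ i, EqOn (ρ.toFun i) (σ.toFun i) I01) : energy W J ρ = energy W J σ := by
  unfold energy
  congr 1
  refine Finset.sum_congr rfl fun i _ => Finset.sum_congr rfl fun j _ => congrArg _ ?_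
  refine setIntegral_congr_fun measurableSet_I01 fun x hx => ?_
  refine setIntegral_congr_fun measurableSet_I01 fun y hy => ?_
  simp only [h i hx, h j hy]

lemma energy_comp {W : ℝ → ℝ → ℝ} (hW : Measurable (uncurry W)) (ρ : FracPartition q)
    {φ : ℝ → ℝ} (hmaps : MapsTo φ I01 I01)
    (hmp : MeasurePreserving φ (volume.restrict I01) (volume.restrict I01)) :
    energy (fun x y => W (φ x) (φ y)) J (ρ.comp hmp.measurable hmaps) = energy W J ρ := by
  unfold energy
  congr 1
  refine Finset.sum_congr rfl fun i _ => Finset.sum_congr rfl fun j _ => congrArg _ ?_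
  exact hmp.integral_integral_comp (measurable_pairIntegrand hW ρ i j)

end Energy

section CutNorm

variable {q : ℕ}

lemma bddAbove_cutNorm_set {D : ℝ → ℝ → ℝ} (hDb : ∃ M, ∀ x y, |D x y| ≤ M) :
    BddAbove {r | ∃ f g : ℝ → ℝ, Measurable f ∧ Measurable g ∧
      (∀ x, f x ∈ I01) ∧ (∀ x, g x ∈ I01) ∧
      r = |∫ x in I01, ∫ y in I01, D x y * f x * g y|} := by
  obtain ⟨M, hM⟩ := hDb
  refine ⟨M, ?_⟩
  rintro _ ⟨f, g, -, -, hf, hg, rfl⟩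
  refine abs_setIntegral_I01_le fun x _ => abs_setIntegral_I01_le fun y _ => ?_
  rw [abs_mul, abs_mul]
  calc |D x y| * |f x| * |g y| ≤ |D x y| * 1 * 1 := by
        gcongr
        exacts [abs_le_one_of_mem_I01 (hf x), abs_le_one_of_mem_I01 (hg y)]
    _ ≤ M := by linarith [hM x y]

/-- `ρ` need not take values in `[0,1]` outside `[0,1]`; its indicator on `[0,1]` does, and is
therefore an admissible test function for the cut norm. -/
lemma abs_pairIntegral_le_cutNorm {D : ℝ → ℝ → ℝ} (hDb : ∃ M, ∀ x y, |D x y| ≤ M)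
    (ρ : FracPartition q) (i j : Fin q) :
    |∫ x in I01, ∫ y in I01, ρ.toFun i x * ρ.toFun j y * D x y| ≤ cutNorm D := by
  have hmem : ∀ k x, I01.indicator (ρ.toFun k) x ∈ I01 := fun k x => by
    by_cases hx : x ∈ I01
    · simpa [indicator_of_mem hx] using ρ.mem_I01 k x hx
    · simpa [indicator_of_notMem hx] using zero_mem_I01
  have heq : ∫ x in I01, ∫ y in I01, ρ.toFun i x * ρ.toFun j y * D x y =
      ∫ x in I01, ∫ y in I01,
        D x y * I01.indicator (ρ.toFun i) x * I01.indicator (ρ.toFun j) y := by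
    refine setIntegral_congr_fun measurableSet_I01 fun x hx => ?_
    refine setIntegral_congr_fun measurableSet_I01 fun y hy => ?_
    simp only [indicator_of_mem hx, indicator_of_mem hy]
    ring
  rw [heq]
  exact le_csSup (bddAbove_cutNorm_set hDb)
    ⟨_, _, (ρ.measurable i).indicator measurableSet_I01,
      (ρ.measurable j).indicator measurableSet_I01, hmem i, hmem j, rfl⟩

lemma abs_energy_le_cutNorm {J : Matrix (Fin q) (Fin q) ℝ} {Jmax : ℝ}
    (hJb : ∀ i j, |J i j| ≤ Jmax) {D : ℝ → ℝ → ℝ} (hDb : ∃ M, ∀ x y, |D x y| ≤ M)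
    (ρ : FracPartition q) : |energy D J ρ| ≤ (q : ℝ) ^ 2 * Jmax * cutNorm D := by
  unfold energy
  rw [abs_neg]
  calc |∑ i, ∑ j, J i j * ∫ x in I01, ∫ y in I01, ρ.toFun i x * ρ.toFun j y * D x y|
      ≤ ∑ i, ∑ j, |J i j| * |∫ x in I01, ∫ y in I01, ρ.toFun i x * ρ.toFun j y * D x y| := by
        refine (Finset.abs_sum_le_sum_abs _ _).trans (Finset.sum_le_sum fun i _ => ?_)
        simpa only [abs_mul] using Finset.abs_sum_le_sum_abs (fun j =>
          J i j * ∫ x in I01, ∫ y in I01, ρ.toFun i x * ρ.toFun j y * D x y) Finset.univ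
    _ ≤ ∑ _i : Fin q, ∑ _j : Fin q, Jmax * cutNorm D := by
        gcongr with i _ j _
        exacts [(abs_nonneg _).trans (hJb i j), hJb i j, abs_pairIntegral_le_cutNorm hDb ρ i j]
    _ = (q : ℝ) ^ 2 * Jmax * cutNorm D := by
        simp only [Finset.sum_const, Finset.card_univ, Fintype.card_fin, nsmul_eq_mul]
        ring

end CutNorm

section GroundStateEnergies

variable {q : ℕ} {J : Matrix (Fin q) (Fin q) ℝ} {Jmax : ℝ}

lemma neg_le_energy {W : ℝ → ℝ → ℝ} (hJb : ∀ i j, |J i j| ≤ Jmax)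
    (hWb : ∃ M, ∀ x y, |W x y| ≤ M) (ρ : FracPartition q) :
    -((q : ℝ) ^ 2 * Jmax * cutNorm W) ≤ energy W J ρ :=
  neg_le_of_abs_le (abs_energy_le_cutNorm hJb hWb ρ)

lemma abs_mgse_sub_le (hJb : ∀ i j, |J i j| ≤ Jmax) {U V : ℝ → ℝ → ℝ}
    (hU : Measurable (uncurry U)) (hUb : ∃ M, ∀ x y, |U x y| ≤ M)
    (hV : Measurable (uncurry V)) (hVb : ∃ M, ∀ x y, |V x y| ≤ M)
    {a : Fin q → ℝ} (ha : IsDist a) :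
    |mgse U J a - mgse V J a| ≤ (q : ℝ) ^ 2 * Jmax * cutNorm (fun x y => U x y - V x y) := by
  have hDb : ∃ M, ∀ x y, |U x y - V x y| ≤ M := by
    obtain ⟨MU, hMU⟩ := hUb
    obtain ⟨MV, hMV⟩ := hVb
    exact ⟨MU + MV, fun x y => (abs_sub _ _).trans (add_le_add (hMU x y) (hMV x y))⟩
  refine abs_sInf_sub_sInf_le ⟨_, FracPartition.setIntegral_const ha⟩
    (fun ρ _ => neg_le_energy hJb hUb ρ) fun ρ _ => ?_
  rw [energy_sub hU hUb hV hVb]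
  exact abs_energy_le_cutNorm hJb hDb ρ

lemma neg_le_mgse {W : ℝ → ℝ → ℝ} (hJb : ∀ i j, |J i j| ≤ Jmax)
    (hWb : ∃ M, ∀ x y, |W x y| ≤ M) {a : Fin q → ℝ} (ha : IsDist a) :
    -((q : ℝ) ^ 2 * Jmax * cutNorm W) ≤ mgse W J a :=
  le_csInf ⟨_, _, FracPartition.setIntegral_const ha, rfl⟩ <| by
    rintro _ ⟨ρ, -, rfl⟩
    exact neg_le_energy hJb hWb ρ

lemma isDist_uniform (hq : 1 ≤ q) : IsDist fun _ : Fin q => 1 / (q : ℝ) := by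
  refine ⟨fun _ => by positivity, ?_⟩
  rw [Finset.sum_const, Finset.card_univ, Fintype.card_fin, nsmul_eq_mul]
  field_simp

lemma abs_ltgse_sub_le (hq : 1 ≤ q) {c : ℝ} (hc : c ≤ 1 / q) (hJb : ∀ i j, |J i j| ≤ Jmax)
    {U V : ℝ → ℝ → ℝ} (hU : Measurable (uncurry U)) (hUb : ∃ M, ∀ x y, |U x y| ≤ M)
    (hV : Measurable (uncurry V)) (hVb : ∃ M, ∀ x y, |V x y| ≤ M) :
    |ltgse U J c - ltgse V J c| ≤
      (q : ℝ) ^ 2 * Jmax * cutNorm (fun x y => U x y - V x y) := by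
  simp only [ltgse, ltgseV, ← and_assoc]
  exact abs_sInf_sub_sInf_le ⟨_, isDist_uniform hq, fun _ => hc⟩
    (fun _ ha => neg_le_mgse hJb hUb ha.1) fun _ ha => abs_mgse_sub_le hJb hU hUb hV hVb ha.1

/-- An energy of `W^φ` at `ρ` is the energy of `W` at `ρ ∘ G` for a measurable left inverse `G`
of `φ`, since `(ρ ∘ G) ∘ φ = ρ` on `[0,1]`. -/
lemma mgse_comp {W : ℝ → ℝ → ℝ} (hW : Measurable (uncurry W)) {φ : ℝ → ℝ}
    (hmaps : MapsTo φ I01 I01) (hinj : InjOn φ I01)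
    (hmp : MeasurePreserving φ (volume.restrict I01) (volume.restrict I01)) (a : Fin q → ℝ) :
    mgse (fun x y => W (φ x) (φ y)) J a = mgse W J a := by
  obtain ⟨G, hG, hGI, hGφ⟩ := exists_measurable_leftInvOn measurableSet_I01
    ⟨0, zero_mem_I01⟩ hmp.measurable hinj
  have hback : ∀ ρ : FracPartition q, ∀ i,
      EqOn (((ρ.comp hG fun y _ => hGI y).comp hmp.measurable hmaps).toFun i)
        (ρ.toFun i) I01 := fun ρ i x hx => congrArg (ρ.toFun i) (hGφ hx)
  unfold mgse
  congr 1
  ext e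
  constructor
  · rintro ⟨ρ, hρa, rfl⟩
    refine ⟨ρ.comp hG fun y _ => hGI y, fun i => ?_, ?_⟩
    · rw [← hρa i, ← FracPartition.setIntegral_comp _ hmaps hmp]
      exact setIntegral_congr_fun measurableSet_I01 (hback ρ i)
    · rw [← energy_comp hW _ hmaps hmp]
      exact energy_congr fun i => (hback ρ i).symm
  · rintro ⟨ρ, hρa, rfl⟩
    refine ⟨ρ.comp hmp.measurable hmaps, fun i => ?_, (energy_comp hW ρ hmaps hmp).symm⟩
    rw [FracPartition.setIntegral_comp _ hmaps hmp, hρa i]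

lemma ltgse_comp {W : ℝ → ℝ → ℝ} (hW : Measurable (uncurry W)) {φ : ℝ → ℝ}
    (hmaps : MapsTo φ I01 I01) (hinj : InjOn φ I01)
    (hmp : MeasurePreserving φ (volume.restrict I01) (volume.restrict I01)) (c : ℝ) :
    ltgse (fun x y => W (φ x) (φ y)) J c = ltgse W J c := by
  simp only [ltgse, ltgseV, mgse_comp hW hmaps hinj hmp]

end GroundStateEnergies

theorem stmt8_general (q : ℕ) (hq : 1 ≤ q) (c : ℝ) (hc : c ≤ 1 / q)
    (J : Matrix (Fin q) (Fin q) ℝ)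
    (Jmax : ℝ) (hJb : ∀ i j, |J i j| ≤ Jmax)
    (U W : ℝ → ℝ → ℝ) (hU : IsGraphon U) (hW : IsGraphon W) :
    |ltgse U J c - ltgse W J c| ≤ (q : ℝ) ^ 2 * Jmax * cutDist U W := by
  have hJmax : 0 ≤ Jmax := (abs_nonneg _).trans (hJb ⟨0, hq⟩ ⟨0, hq⟩)
  refine le_mul_csInf ⟨_, id, measurable_id, bijOn_id I01, MeasurePreserving.id _, rfl⟩
    (by positivity) ?_
  rintro _ ⟨φ, hφ, hbij, hmp, rfl⟩
  obtain ⟨hUm, -, hUb⟩ := hU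
  obtain ⟨hWm, -, M, hM⟩ := hW
  rw [← ltgse_comp hWm hbij.mapsTo hbij.injOn hmp]
  exact abs_ltgse_sub_le hq hc hJb hUm hUb (hWm.comp (hφ.prodMap hφ)) ⟨M, fun x y => hM _ _⟩

theorem stmt8 (q : ℕ) (hq : 1 ≤ q) (c : ℝ) (hc0 : 0 ≤ c) (hc : c ≤ 1 / q)
    (J : Matrix (Fin q) (Fin q) ℝ) (hJ : J.IsSymm)
    (Jmax : ℝ) (hJb : ∀ i j, |J i j| ≤ Jmax)
    (U W : ℝ → ℝ → ℝ) (hU : IsGraphon U) (hW : IsGraphon W) :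
    |ltgse U J c - ltgse W J c| ≤ (q : ℝ) ^ 2 * Jmax * cutDist U W :=
  stmt8_general q hq c hc J Jmax hJb U W hU hW
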